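/- Let G = (V,E) be a finite simple connected graph of order n ≥ 2. Then α₀(S(G)) = n = β₀(S(G)) holds if and only if |N(S)| ≥ |S| for every independent set S of G. -/

import Mathlib

/-- A finset `S` is independent in `G` if no two of its vertices are adjacent. -/
def IsIndepFinset {V : Type*} (G : SimpleGraph V) (S : Finset V) : Prop :=
  ∀ u ∈ S, ∀ v ∈ S, ¬ G.Adj u v

open Classical in
/-- The neighborhood `N(S)` of a finset `S` in `G`: all vertices adjacent to some vertex of `S`. -/
noncomputable def nbhdSet {V : Type*} [Fintype V] (G : SimpleGraph V) (S : Finset V) : Finset V :=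
  Finset.univ.filter fun v => ∃ u ∈ S, G.Adj u v

/-- The independence number `β₀(G)`: maximum size of an independent set. -/
noncomputable def indepNum {V : Type*} [Fintype V] (G : SimpleGraph V) : ℕ :=
  sSup {k : ℕ | ∃ S : Finset V, IsIndepFinset G S ∧ S.card = k}

/-- A finset `C` is a vertex cover of `G` if it meets every edge. -/
def IsVertexCover {V : Type*} (G : SimpleGraph V) (C : Finset V) : Prop :=
  ∀ u v, G.Adj u v → u ∈ C ∨ v ∈ C

/-- The vertex cover number `α₀(G)`: minimum size of a vertex cover. -/
noncomputable def coverNum {V : Type*} [Fintype V] (G : SimpleGraph V) : ℕ :=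
  sInf {k : ℕ | ∃ C : Finset V, IsVertexCover G C ∧ C.card = k}

/-- `β₀*(G) = max {|S| - |N(S)| : S independent in G}`. -/
noncomputable def betaStar {V : Type*} [Fintype V] (G : SimpleGraph V) : ℤ :=
  sSup {k : ℤ | ∃ S : Finset V,
    IsIndepFinset G S ∧ k = (S.card : ℤ) - ((nbhdSet G S).card : ℤ)}

/-- The splitting graph `S(G)`: vertex set `V ⊔ V'`, with the edges of `G` together with an
edge between the copy `v'` of `v` and `u` for every edge `vu` of `G`. -/
def splittingGraph {V : Type*} (G : SimpleGraph V) : SimpleGraph (V ⊕ V) where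
  Adj x y :=
    match x, y with
    | Sum.inl a, Sum.inl b => G.Adj a b
    | Sum.inl a, Sum.inr b => G.Adj a b
    | Sum.inr a, Sum.inl b => G.Adj a b
    | Sum.inr _, Sum.inr _ => False
  symm := ⟨by
    rintro (a | a) (b | b) h
    · exact G.symm.symm _ _ h
    · exact G.symm.symm _ _ h
    · exact G.symm.symm _ _ h
    · exact h⟩
  loopless := ⟨by
    rintro (a | a) h
    · exact G.loopless.irrefl a h
    · exact h⟩

/-!
The complement of a vertex cover is an independent set and conversely, so
`α₀(H) + β₀(H) = |V(H)|`; for `H = S(G)` this is `2n`, and the copy `V'` is independent, so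
`β₀(S(G)) ≥ n`. Hence the condition `α₀(S(G)) = n = β₀(S(G))` amounts to `β₀(S(G)) ≤ n`.
An independent set of `S(G)` is `S ⊔ T'` with `S` independent in `G` and `T` disjoint from
`N(S)`; the largest one over a given `S` has size `|S| + n - |N(S)|`, which is `≤ n` for all `S`
exactly when `|S| ≤ |N(S)|` for all independent `S`.
-/

open Finset

section IndepCover

variable {W : Type*} [Fintype W] (H : SimpleGraph W)

lemma isIndepFinset_compl_iff_isVertexCover [DecidableEq W] (C : Finset W) :
    IsIndepFinset H Cᶜ ↔ IsVertexCover H C := by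
  simp only [IsIndepFinset, IsVertexCover, mem_compl]
  constructor
  · intro h u v huv
    by_contra! hC
    exact h u hC.1 v hC.2 huv
  · intro h u hu v hv huv
    rcases h u v huv with hC | hC <;> contradiction

lemma bddAbove_card_isIndepFinset :
    BddAbove {k : ℕ | ∃ S : Finset W, IsIndepFinset H S ∧ S.card = k} := by
  refine ⟨Fintype.card W, ?_⟩
  rintro k ⟨S, -, rfl⟩
  exact card_le_univ S

lemma card_le_indepNum {S : Finset W} (hS : IsIndepFinset H S) : S.card ≤ indepNum H :=
  le_csSup (bddAbove_card_isIndepFinset H) ⟨S, hS, rfl⟩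

lemma exists_isIndepFinset_card_eq_indepNum :
    ∃ S : Finset W, IsIndepFinset H S ∧ S.card = indepNum H := by
  refine Nat.sSup_mem ?_ (bddAbove_card_isIndepFinset H)
  exact ⟨0, ∅, fun u hu => absurd hu (notMem_empty u), rfl⟩

lemma coverNum_le_card {C : Finset W} (hC : IsVertexCover H C) : coverNum H ≤ C.card :=
  Nat.sInf_le ⟨C, hC, rfl⟩

lemma exists_isVertexCover_card_eq_coverNum :
    ∃ C : Finset W, IsVertexCover H C ∧ C.card = coverNum H :=
  Nat.sInf_mem (s := {k : ℕ | ∃ C : Finset W, IsVertexCover H C ∧ C.card = k})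
    ⟨_, univ, fun u _ _ => Or.inl (mem_univ u), rfl⟩

theorem coverNum_add_indepNum : coverNum H + indepNum H = Fintype.card W := by
  classical
  obtain ⟨C, hC, hCcard⟩ := exists_isVertexCover_card_eq_coverNum H
  obtain ⟨S, hS, hScard⟩ := exists_isIndepFinset_card_eq_indepNum H
  have hCcompl := card_le_indepNum H ((isIndepFinset_compl_iff_isVertexCover H C).2 hC)
  have hScompl := coverNum_le_card H ((isIndepFinset_compl_iff_isVertexCover H Sᶜ).1
    (by rwa [compl_compl]))
  rw [card_compl] at hCcompl hScompl
  have := card_le_univ C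
  have := card_le_univ S
  omega

end IndepCover

section SplittingGraph

variable {V : Type*} [Fintype V] (G : SimpleGraph V)

lemma mem_nbhdSet {S : Finset V} {v : V} : v ∈ nbhdSet G S ↔ ∃ u ∈ S, G.Adj u v := by
  simp [nbhdSet]

lemma isIndepFinset_splittingGraph_disjSum_iff (S T : Finset V) :
    IsIndepFinset (splittingGraph G) (S.disjSum T) ↔
      IsIndepFinset G S ∧ Disjoint T (nbhdSet G S) := by
  constructor
  · intro h
    refine ⟨fun u hu v hv => h (.inl u) (inl_mem_disjSum.2 hu) (.inl v) (inl_mem_disjSum.2 hv),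
      disjoint_left.2 fun b hb hbN => ?_⟩
    obtain ⟨u, hu, hub⟩ := (mem_nbhdSet G).1 hbN
    exact h (.inl u) (inl_mem_disjSum.2 hu) (.inr b) (inr_mem_disjSum.2 hb) hub
  · rintro ⟨hS, hT⟩ (a | a) ha (b | b) hb hab
    all_goals simp only [inl_mem_disjSum, inr_mem_disjSum] at ha hb
    · exact hS a ha b hb hab
    · exact disjoint_left.1 hT hb ((mem_nbhdSet G).2 ⟨a, ha, hab⟩)
    · exact disjoint_left.1 hT ha ((mem_nbhdSet G).2 ⟨b, hb, hab.symm⟩)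
    · exact hab

lemma card_le_indepNum_splittingGraph : Fintype.card V ≤ indepNum (splittingGraph G) := by
  have hindep : IsIndepFinset (splittingGraph G) ((∅ : Finset V).disjSum univ) := by
    rintro (a | a) ha (b | b) hb hab
    · simp at ha
    · simp at ha
    · simp at hb
    · exact hab
  simpa using card_le_indepNum _ hindep

theorem indepNum_splittingGraph_le_iff :
    indepNum (splittingGraph G) ≤ Fintype.card V ↔
      ∀ S : Finset V, IsIndepFinset G S → S.card ≤ (nbhdSet G S).card := by
  classical
  constructor
  · intro hle S hS
    have hindep := (isIndepFinset_splittingGraph_disjSum_iff G S (nbhdSet G S)ᶜ).2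
      ⟨hS, disjoint_compl_left⟩
    have hcard := (card_le_indepNum _ hindep).trans hle
    rw [card_disjSum, card_compl] at hcard
    have := card_le_univ (nbhdSet G S)
    omega
  · intro hall
    obtain ⟨A, hA, hAcard⟩ := exists_isIndepFinset_card_eq_indepNum (splittingGraph G)
    rw [← toLeft_disjSum_toRight (u := A)] at hA hAcard
    obtain ⟨hS, hT⟩ := (isIndepFinset_splittingGraph_disjSum_iff G _ _).1 hA
    have hTN := (card_union_of_disjoint hT).symm.trans_le (card_le_univ _)
    have := hall _ hS
    rw [card_disjSum] at hAcard
    omega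

end SplittingGraph

theorem stmt3_general {V : Type*} [Fintype V] (G : SimpleGraph V) :
    (coverNum (splittingGraph G) = Fintype.card V ∧
      indepNum (splittingGraph G) = Fintype.card V) ↔
    ∀ S : Finset V, IsIndepFinset G S → S.card ≤ (nbhdSet G S).card := by
  have hsum := coverNum_add_indepNum (splittingGraph G)
  have hge := card_le_indepNum_splittingGraph G
  rw [Fintype.card_sum] at hsum
  rw [← indepNum_splittingGraph_le_iff]
  constructor
  · rintro ⟨-, h⟩
    exact h.le
  · intro h
    omega

theorem stmt3 {V : Type*} [Fintype V] (G : SimpleGraph V)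
    (hconn : G.Connected) (hn : 2 ≤ Fintype.card V) :
    (coverNum (splittingGraph G) = Fintype.card V ∧
      indepNum (splittingGraph G) = Fintype.card V) ↔
    ∀ S : Finset V, IsIndepFinset G S → S.card ≤ (nbhdSet G S).card :=
  stmt3_general G
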